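/- Suppose all vote shares p_d are distinct and ⌊a⌋ ∈ {1,…,N−1}. Then for every w ≥ 0, the seat total S = ⌊a⌋ minimizes Φ_p(·; w) over {0,…,N} if and only if w ≥ 1 − 2·p_(⌊a⌋) and (2⌊a⌋ + 1 − 2a)·w ≥ 2·p_(⌊a⌋+1) − 1. -/
import Mathlib


open Finset

/-- Sum of the `S` largest entries of the vote-share profile `p`. -/
noncomputable def topSum {N : ℕ} (p : Fin N → ℝ) (S : ℕ) : ℝ :=
  ∑ i : Fin N, if (i : ℕ) < S then p (Tuple.sort p i.rev) else 0

/-- `ordStat p i` is the `(i+1)`-th largest entry of `p` (so `ordStat p ⟨S-1,_⟩` is `p_(S)`). -/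
noncomputable def ordStat {N : ℕ} (p : Fin N → ℝ) (i : Fin N) : ℝ :=
  p (Tuple.sort p i.rev)

/-- Total misrepresentation `Φ_p(S; w) = S + a − 2·Γ_p(S) + w·|a − S|` of a top-`S`
allocation at weight `w`, where `a = ∑ d, p d`. -/
noncomputable def PhiS {N : ℕ} (p : Fin N → ℝ) (S : ℕ) (w : ℝ) : ℝ :=
  (S : ℝ) + (∑ d, p d) - 2 * topSum p S + w * |(∑ d, p d) - (S : ℝ)|

lemma topSum_succ {N : ℕ} (p : Fin N → ℝ) (S : ℕ) (hS : S < N) :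
    topSum p (S + 1) = topSum p S + ordStat p ⟨S, hS⟩ := by
  unfold topSum ordStat
  have key : ∀ i : Fin N, (if (i : ℕ) < S + 1 then p (Tuple.sort p i.rev) else 0)
      = (if (i : ℕ) < S then p (Tuple.sort p i.rev) else 0)
        + (if i = ⟨S, hS⟩ then p (Tuple.sort p i.rev) else 0) := by
    intro i
    rcases lt_trichotomy (i : ℕ) S with h | h | h
    · rw [if_pos (by omega), if_pos h, if_neg (by simp [Fin.ext_iff]; omega)]; ring
    · rw [if_pos (by omega), if_neg (by omega), if_pos (Fin.ext h)]; ring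
    · rw [if_neg (by omega), if_neg (by omega), if_neg (by simp [Fin.ext_iff]; omega)]; ring
  simp_rw [key]
  rw [Finset.sum_add_distrib, Finset.sum_ite_eq' Finset.univ]
  simp

lemma phi_succ {N : ℕ} (p : Fin N → ℝ) (S : ℕ) (hS : S < N) (w : ℝ) :
    PhiS p (S + 1) w = PhiS p S w + (1 - 2 * ordStat p ⟨S, hS⟩)
      + w * (|(∑ d, p d) - ((S : ℝ) + 1)| - |(∑ d, p d) - (S : ℝ)|) := by
  unfold PhiS
  rw [topSum_succ p S hS]
  push_cast
  ring

lemma ordStat_anti {N : ℕ} (p : Fin N → ℝ) {i j : Fin N} (h : i ≤ j) :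
    ordStat p j ≤ ordStat p i := by
  have hm := Tuple.monotone_sort p
  have : j.rev ≤ i.rev := by simp [Fin.le_def, Fin.rev]; omega
  exact hm this

/-- near-proportionality weight set for `S = ⌊a⌋`.
Suppose all vote shares are distinct and `⌊a⌋ ∈ {1,…,N−1}`. Then for every `w ≥ 0`,
the seat total `S = ⌊a⌋` minimizes `Φ_p(·; w)` over `{0,…,N}` if and only if
`w ≥ 1 − 2·p_(⌊a⌋)` and `(2⌊a⌋ + 1 − 2a)·w ≥ 2·p_(⌊a⌋+1) − 1`. -/
theorem stmt5 (N : ℕ) (hN : 3 ≤ N) (p : Fin N → ℝ)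
    (hp : ∀ d, 0 ≤ p d ∧ p d ≤ 1) (hinj : Function.Injective p)
    (a : ℝ) (ha : a = ∑ d, p d)
    (hfl1 : 1 ≤ ⌊a⌋₊) (hfl2 : ⌊a⌋₊ ≤ N - 1)
    (w : ℝ) (hw : 0 ≤ w) :
    (∀ S' ≤ N, PhiS p ⌊a⌋₊ w ≤ PhiS p S' w) ↔
      (1 - 2 * ordStat p ⟨⌊a⌋₊ - 1, by omega⟩ ≤ w ∧
       2 * ordStat p ⟨⌊a⌋₊, by omega⟩ - 1 ≤ (2 * (⌊a⌋₊ : ℝ) + 1 - 2 * a) * w) := by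
  set m := ⌊a⌋₊ with hm
  have hmN : m < N := by omega
  have hA0 : 0 ≤ a := by
    rw [ha]; exact Finset.sum_nonneg fun d _ => (hp d).1
  have hma : (m : ℝ) ≤ a := Nat.floor_le hA0
  have haM : a < (m : ℝ) + 1 := Nat.lt_floor_add_one a
  -- step lemmas
  have stepDown : ∀ j (hjN : j < N), j < m → PhiS p (j + 1) w
      = PhiS p j w + (1 - 2 * ordStat p ⟨j, hjN⟩ - w) := by
    intro j hjN hj
    have e := phi_succ p j hjN w
    rw [← ha] at e
    have hja : (j : ℝ) + 1 ≤ a := by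
      have : (j : ℝ) + 1 ≤ (m : ℝ) := by exact_mod_cast hj
      linarith
    rw [abs_of_nonneg (by linarith), abs_of_nonneg (by linarith)] at e
    rw [e]; ring
  have stepUpFirst : PhiS p (m + 1) w
      = PhiS p m w + (1 - 2 * ordStat p ⟨m, hmN⟩ + w * (2 * (m : ℝ) + 1 - 2 * a)) := by
    have e := phi_succ p m hmN w
    rw [← ha] at e
    rw [abs_of_nonpos (by linarith), abs_of_nonneg (by linarith)] at e
    rw [e]; ring
  have stepUpLater : ∀ j (hjN : j < N), m < j → PhiS p (j + 1) w
      = PhiS p j w + (1 - 2 * ordStat p ⟨j, hjN⟩ + w) := by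
    intro j hjN hj
    have e := phi_succ p j hjN w
    rw [← ha] at e
    have hja : a ≤ (j : ℝ) := by
      have : (m : ℝ) + 1 ≤ (j : ℝ) := by exact_mod_cast hj
      linarith
    rw [abs_of_nonpos (by linarith), abs_of_nonpos (by linarith)] at e
    rw [e]; ring
  have hcoef : (2 * (m : ℝ) + 1 - 2 * a) * w ≤ w := by nlinarith
  constructor
  · intro h
    constructor
    · have h1 := h (m - 1) (by omega)
      have e := stepDown (m - 1) (by omega) (by omega)
      rw [show m - 1 + 1 = m from by omega] at e
      linarith
    · have h2 := h (m + 1) (by omega)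
      linarith [stepUpFirst]
  · rintro ⟨h1, h2⟩ S' hS'
    have up : ∀ k, m + k ≤ N → PhiS p m w ≤ PhiS p (m + k) w := by
      intro k
      induction k with
      | zero => intro _; exact le_refl _
      | succ k ih =>
        intro hk
        have hk' : m + k ≤ N := by omega
        have ihk := ih hk'
        rcases Nat.eq_zero_or_pos k with hk0 | hk0
        · subst hk0
          have : PhiS p (m + 1) w
              = PhiS p m w + (1 - 2 * ordStat p ⟨m, hmN⟩ + w * (2 * (m : ℝ) + 1 - 2 * a)) :=
            stepUpFirst
          show PhiS p m w ≤ PhiS p (m + 1) w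
          linarith
        · have e := stepUpLater (m + k) (by omega) (by omega)
          have hord : ordStat p ⟨m + k, by omega⟩ ≤ ordStat p ⟨m, hmN⟩ :=
            ordStat_anti p (Fin.mk_le_mk.mpr (by omega))
          show PhiS p m w ≤ PhiS p (m + k + 1) w
          linarith
    have down : ∀ k, ∀ j, j + k = m → PhiS p m w ≤ PhiS p j w := by
      intro k
      induction k with
      | zero => intro j hj; rw [show j = m from by omega]
      | succ k ih =>
        intro j hj
        have ihj := ih (j + 1) (by omega)
        have e := stepDown j (by omega) (by omega)
        have hord : ordStat p ⟨m - 1, by omega⟩ ≤ ordStat p ⟨j, by omega⟩ :=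
          ordStat_anti p (Fin.mk_le_mk.mpr (by omega))
        linarith
    rcases le_or_gt m S' with hle | hlt
    · have := up (S' - m) (by omega)
      rwa [show m + (S' - m) = S' from by omega] at this
    · exact down (m - S') S' (by omega)
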